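/- Let B = ω₀·[[-1,0,0,-α],[α,-1,0,0],[0,α,-1,0],[0,0,α,-1]] with ω₀ > 0 and α = √2. Then the symmetric part B_s = (1/2)(B + Bᵀ) is negative semidefinite but not negative definite. -/

import Mathlib

/-!
The quadratic form of the symmetric part of a matrix is that of the matrix itself. For the Moog
matrix with `α = √2` it equals `-(y₁² + y₂²) / 2` with `y₁ = x₀ - √2 x₁ + x₂` and
`y₂ = x₀ - x₂ + √2 x₃`, so it is nonpositive, and it vanishes at `x = (1, √2, 1, 0) ≠ 0`.
-/

open Matrix

theorem Matrix.dotProduct_half_smul_add_transpose_mulVec {n R : Type*} [Fintype n] [Field R]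
    [NeZero (2 : R)] (A : Matrix n n R) (x : n → R) :
    x ⬝ᵥ (((1 : R) / 2) • (A + Aᵀ)) *ᵥ x = x ⬝ᵥ A *ᵥ x := by
  rw [smul_mulVec, add_mulVec, dotProduct_smul, dotProduct_add, dotProduct_transpose_mulVec,
    smul_eq_mul]
  field_simp
  ring

def moogMatrix {R : Type*} [CommRing R] (α : R) : Matrix (Fin 4) (Fin 4) R :=
  !![-1, 0, 0, -α;
     α, -1, 0, 0;
     0, α, -1, 0;
     0, 0, α, -1]

theorem dotProduct_moogMatrix_mulVec {R : Type*} [CommRing R] (α : R) (x : Fin 4 → R) :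
    x ⬝ᵥ moogMatrix α *ᵥ x =
      α * (x 0 * x 1 + x 1 * x 2 + x 2 * x 3 - x 0 * x 3)
        - (x 0 ^ 2 + x 1 ^ 2 + x 2 ^ 2 + x 3 ^ 2) := by
  simp only [dotProduct, mulVec, moogMatrix, of_apply, cons_val', cons_val_fin_one,
    Fin.sum_univ_four, cons_val_zero, cons_val_one, cons_val]
  ring

theorem dotProduct_moogMatrix_sqrt_two_mulVec (x : Fin 4 → ℝ) :
    x ⬝ᵥ moogMatrix (√2) *ᵥ x =
      -((x 0 - √2 * x 1 + x 2) ^ 2 + (x 0 - x 2 + √2 * x 3) ^ 2) / 2 := by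
  have hsq : √2 ^ 2 = 2 := Real.sq_sqrt zero_le_two
  rw [dotProduct_moogMatrix_mulVec]
  linear_combination (x 1 ^ 2 + x 3 ^ 2) / 2 * hsq

theorem dotProduct_moogMatrix_sqrt_two_mulVec_nonpos (x : Fin 4 → ℝ) :
    x ⬝ᵥ moogMatrix (√2) *ᵥ x ≤ 0 := by
  rw [dotProduct_moogMatrix_sqrt_two_mulVec]
  have := add_nonneg (sq_nonneg (x 0 - √2 * x 1 + x 2)) (sq_nonneg (x 0 - x 2 + √2 * x 3))
  linarith

theorem dotProduct_moogMatrix_sqrt_two_mulVec_eq_zero :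
    ![1, √2, 1, 0] ⬝ᵥ moogMatrix (√2) *ᵥ ![1, √2, 1, 0] = 0 := by
  simp only [dotProduct_moogMatrix_sqrt_two_mulVec, cons_val_zero, cons_val_one, cons_val_two,
    cons_val_three]
  norm_num

theorem scaled_moog_symmetric_part_semidef_at_sqrt2 (ω₀ : ℝ) (hω : 0 < ω₀) :
    (∀ x : Fin 4 → ℝ,
      x ⬝ᵥ ((((1:ℝ)/2) • (ω₀ • !![(-1 : ℝ), 0, 0, -Real.sqrt 2;
                                   Real.sqrt 2, -1, 0, 0;
                                   0, Real.sqrt 2, -1, 0;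
                                   0, 0, Real.sqrt 2, -1]
          + (ω₀ • !![(-1 : ℝ), 0, 0, -Real.sqrt 2;
                     Real.sqrt 2, -1, 0, 0;
                     0, Real.sqrt 2, -1, 0;
                     0, 0, Real.sqrt 2, -1])ᵀ)) *ᵥ x) ≤ 0)
    ∧ ¬ (∀ x : Fin 4 → ℝ, x ≠ 0 →
      x ⬝ᵥ ((((1:ℝ)/2) • (ω₀ • !![(-1 : ℝ), 0, 0, -Real.sqrt 2;
                                   Real.sqrt 2, -1, 0, 0;
                                   0, Real.sqrt 2, -1, 0;
                                   0, 0, Real.sqrt 2, -1]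
          + (ω₀ • !![(-1 : ℝ), 0, 0, -Real.sqrt 2;
                     Real.sqrt 2, -1, 0, 0;
                     0, Real.sqrt 2, -1, 0;
                     0, 0, Real.sqrt 2, -1])ᵀ)) *ᵥ x) < 0) := by
  have hform (x : Fin 4 → ℝ) :
      x ⬝ᵥ (((1 : ℝ) / 2) • (ω₀ • moogMatrix (√2) + (ω₀ • moogMatrix (√2))ᵀ)) *ᵥ x =
        ω₀ * (x ⬝ᵥ moogMatrix (√2) *ᵥ x) := by
    rw [dotProduct_half_smul_add_transpose_mulVec, smul_mulVec, dotProduct_smul, smul_eq_mul]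
  refine ⟨fun x => (hform x).trans_le ?_, fun hdef => ?_⟩
  · exact mul_nonpos_of_nonneg_of_nonpos hω.le (dotProduct_moogMatrix_sqrt_two_mulVec_nonpos x)
  · have hne : (![1, √2, 1, 0] : Fin 4 → ℝ) ≠ 0 := fun h => one_ne_zero (congrFun h 0)
    have hneg := (hform _).symm.trans_lt (hdef _ hne)
    rw [dotProduct_moogMatrix_sqrt_two_mulVec_eq_zero, mul_zero] at hneg
    exact lt_irrefl 0 hneg
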